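/- Let γ : S¹ → ℝⁿ be a C^{1,1} simple closed curve, i.e. γ' is Lipschitz and γ' ≠ 0. Then DCSD(γ(S¹)) > 0. -/

import Mathlib

/-- The set of distances realized by double critical pairs of a closed curve
`γ : ℝ → ℝⁿ`. -/
def dcDists {n : ℕ} (γ : ℝ → EuclideanSpace ℝ (Fin n)) : Set ℝ :=
  {r | ∃ s t : ℝ, γ s ≠ γ t ∧
    (inner ℝ (γ s - γ t) (deriv γ s) : ℝ) = 0 ∧
    (inner ℝ (γ s - γ t) (deriv γ t) : ℝ) = 0 ∧
    r = dist (γ s) (γ t)}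

/-- The double critical self distance. -/
noncomputable def DCSD {n : ℕ} (γ : ℝ → EuclideanSpace ℝ (Fin n)) : ℝ :=
  sInf (dcDists γ)

/-!
Double critical pairs of nearby parameters do not exist: if `C` is the Lipschitz constant of `γ'`
and `m > 0` a lower bound for `‖γ'‖`, then for `C |s - t| < m` the function `u ↦ ⟪γ u, γ' t⟫` has
positive derivative between `s` and `t`, so `⟪γ s - γ t, γ' t⟫ ≠ 0`. Hence the parameters of a
double critical pair are at least `δ > 0` apart modulo the period, and on the compact set of such
parameter pairs the distance `‖γ s - γ t‖` is bounded below by some `ε > 0`, by injectivity.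
A diametral pair is double critical, so the infimum is over a nonempty set and is at least `ε`.
-/

open Function Set
open scoped NNReal InnerProductSpace

section InnerProductSpace

variable {E : Type*} [NormedAddCommGroup E] [InnerProductSpace ℝ E]

lemma real_inner_pos_of_norm_sub_lt {x y : E} (h : ‖x - y‖ < ‖y‖) : 0 < ⟪x, y⟫_ℝ := by
  have := norm_sub_sq_real x y
  nlinarith [norm_nonneg (x - y), sq_nonneg ‖x‖]

lemma inner_sub_deriv_ne_zero {γ : ℝ → E} {C : ℝ≥0} (hγ : Differentiable ℝ γ)
    (hLip : LipschitzWith C (deriv γ)) {s t : ℝ} (hst : s ≠ t)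
    (h : C * dist s t < ‖deriv γ t‖) : ⟪γ s - γ t, deriv γ t⟫_ℝ ≠ 0 := by
  set w := deriv γ t
  have hφ : ∀ u, HasDerivAt (fun v => ⟪γ v, w⟫_ℝ) ⟪deriv γ u, w⟫_ℝ u := fun u => by
    simpa using (hγ u).hasDerivAt.inner ℝ (hasDerivAt_const u w)
  have hmono : StrictMonoOn (fun v => ⟪γ v, w⟫_ℝ) (uIcc s t) := by
    refine strictMonoOn_of_deriv_pos (convex_uIcc s t)
      (fun u _ => (hφ u).continuousAt.continuousWithinAt) fun u hu => ?_
    rw [(hφ u).deriv]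
    refine real_inner_pos_of_norm_sub_lt ?_
    calc ‖deriv γ u - w‖ = dist (deriv γ u) (deriv γ t) := (dist_eq_norm _ _).symm
      _ ≤ C * dist u t := hLip.dist_le_mul u t
      _ ≤ C * dist s t := by
        gcongr; exact Real.dist_right_le_of_mem_uIcc (interior_subset hu)
      _ < ‖w‖ := h
  rw [inner_sub_left, sub_ne_zero]
  exact hmono.injOn.ne left_mem_uIcc right_mem_uIcc hst

lemma exists_pos_le_dist_of_inner_sub_deriv_eq_zero {γ : ℝ → E} {C : ℝ≥0} {m : ℝ}
    (hγ : Differentiable ℝ γ) (hLip : LipschitzWith C (deriv γ)) (hm0 : 0 < m)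
    (hm : ∀ t, m ≤ ‖deriv γ t‖) :
    ∃ δ > 0, ∀ s t, s ≠ t → ⟪γ s - γ t, deriv γ t⟫_ℝ = 0 → δ ≤ dist s t := by
  refine ⟨m / (C + 1), by positivity, fun s t hst h0 => ?_⟩
  by_contra! hlt
  refine inner_sub_deriv_ne_zero hγ hLip hst ?_ h0
  calc (C : ℝ) * dist s t ≤ (C + 1) * dist s t := by gcongr; linarith
    _ < m := by rwa [lt_div_iff₀' (by positivity)] at hlt
    _ ≤ ‖deriv γ t‖ := hm t

lemma inner_sub_deriv_eq_zero_of_forall_dist_le {γ : ℝ → E} {p : E} {s : ℝ}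
    (hγ : DifferentiableAt ℝ γ s) (hmax : ∀ u, dist (γ u) p ≤ dist (γ s) p) :
    ⟪γ s - p, deriv γ s⟫_ℝ = 0 := by
  have hloc : IsLocalMax (fun u => ‖γ u - p‖ ^ 2) s := Filter.Eventually.of_forall fun u => by
    simp only [← dist_eq_norm]
    exact pow_le_pow_left₀ dist_nonneg (hmax u) 2
  have := hloc.hasDerivAt_eq_zero (hγ.hasDerivAt.sub_const p).norm_sq
  linarith

lemma Function.Periodic.exists_double_critical_pair {γ : ℝ → E} {L : ℝ} (hper : Periodic γ L)
    (hL : L ≠ 0) (hγ : Differentiable ℝ γ) (hnc : ∃ a b, γ a ≠ γ b) :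
    ∃ s t, γ s ≠ γ t ∧ ⟪γ s - γ t, deriv γ s⟫_ℝ = 0 ∧ ⟪γ s - γ t, deriv γ t⟫_ℝ = 0 := by
  have hK := hper.compact_of_continuous hL hγ.continuous
  obtain ⟨⟨_, _⟩, ⟨⟨s, rfl⟩, ⟨t, rfl⟩⟩, hmax⟩ := (hK.prod hK).exists_isMaxOn
    ((range_nonempty γ).prod (range_nonempty γ)) continuous_dist.continuousOn
  have hmax (u v : ℝ) : dist (γ u) (γ v) ≤ dist (γ s) (γ t) :=
    hmax (mk_mem_prod (mem_range_self u) (mem_range_self v))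
  refine ⟨s, t, fun h => ?_, inner_sub_deriv_eq_zero_of_forall_dist_le (hγ s) (hmax · t), ?_⟩
  · obtain ⟨a, b, hab⟩ := hnc
    exact hab (dist_le_zero.1 ((hmax a b).trans_eq (by rw [h, dist_self])))
  · have := inner_sub_deriv_eq_zero_of_forall_dist_le (hγ t)
      fun u => (dist_comm _ _).trans_le ((hmax s u).trans_eq (dist_comm _ _))
    rwa [← neg_sub, inner_neg_left, neg_eq_zero] at this

end InnerProductSpace

lemma Function.Periodic.deriv {F : Type*} [NormedAddCommGroup F] [NormedSpace ℝ F] {f : ℝ → F}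
    {L : ℝ} (h : Periodic f L) : Periodic (deriv f) L := fun x => by
  rw [← deriv_comp_add_const, show (fun y => f (y + L)) = f from funext h]

lemma Function.Periodic.exists_pos_le_norm {F : Type*} [NormedAddCommGroup F] {f : ℝ → F}
    {L : ℝ} (hper : Periodic f L) (hL : L ≠ 0) (hf : Continuous f) (hne : ∀ t, f t ≠ 0) :
    ∃ m > 0, ∀ t, m ≤ ‖f t‖ := by
  obtain ⟨m, hm, hle⟩ := (hper.compact_of_continuous hL hf).exists_forall_le' (a := 0)
    continuous_norm.continuousOn (by rintro _ ⟨t, rfl⟩; exact norm_pos_iff.2 (hne t))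
  exact ⟨m, hm, fun t => hle _ (mem_range_self t)⟩

lemma toIcoMod_mem_Icc_of_forall_le_dist {L δ x : ℝ} (hL : 0 < L)
    (h : ∀ n : ℤ, δ ≤ dist x (n • L)) : toIcoMod hL 0 x ∈ Icc δ (L - δ) := by
  have h₀ := h (toIcoDiv hL 0 x)
  have h₁ := h (toIcoDiv hL 0 x + 1)
  have hmem := toIcoMod_mem_Ico' hL x
  rw [toIcoMod, Real.dist_eq] at *
  rw [add_smul, one_smul, ← sub_sub] at h₁
  rw [abs_of_nonneg hmem.1] at h₀
  rw [abs_of_neg (by linarith [hmem.2])] at h₁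
  constructor <;> linarith

section Periodic

variable {X : Type*} {f : ℝ → X} {L : ℝ}

lemma Function.Periodic.toIcoMod_eq_of_injOn (hper : Periodic f L) (hL : 0 < L)
    (hinj : InjOn f (Ico 0 L)) {x y : ℝ} (h : f x = f y) : toIcoMod hL 0 x = toIcoMod hL 0 y :=
  hinj (toIcoMod_mem_Ico' hL x) (toIcoMod_mem_Ico' hL y) <| by
    rwa [toIcoMod, toIcoMod, hper.sub_zsmul_eq, hper.sub_zsmul_eq]

lemma Function.Periodic.apply_ne_apply_add_of_injOn (hper : Periodic f L) (hL : 0 < L)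
    (hinj : InjOn f (Ico 0 L)) {d : ℝ} (hd₀ : 0 < d) (hdL : d < L) (a : ℝ) :
    f a ≠ f (a + d) := fun h => by
  obtain ⟨n, hn⟩ := (toIcoMod_eq_toIcoMod hL).1 (hper.toIcoMod_eq_of_injOn hL hinj h)
  rw [add_sub_cancel_left, zsmul_eq_mul] at hn
  rcases le_or_gt n 0 with hn₀ | hn₁
  · have : (n : ℝ) ≤ 0 := by exact_mod_cast hn₀
    nlinarith
  · have : (1 : ℝ) ≤ n := by exact_mod_cast hn₁
    nlinarith

lemma Function.Periodic.exists_pos_le_dist_add [MetricSpace X] (hper : Periodic f L) (hL : 0 < L)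
    (hinj : InjOn f (Ico 0 L)) (hf : Continuous f) {δ : ℝ} (hδ : 0 < δ) :
    ∃ ε > 0, ∀ a, ∀ d ∈ Icc δ (L - δ), ε ≤ dist (f a) (f (a + d)) := by
  obtain ⟨ε, hε, hle⟩ := (isCompact_Icc.prod isCompact_Icc).exists_forall_le' (a := 0)
    (s := Icc 0 L ×ˢ Icc δ (L - δ)) (f := fun p : ℝ × ℝ => dist (f p.1) (f (p.1 + p.2)))
    (by fun_prop) fun p hp => dist_pos.2 <|
      hper.apply_ne_apply_add_of_injOn hL hinj (by linarith [hp.2.1]) (by linarith [hp.2.2]) p.1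
  refine ⟨ε, hε, fun a d hd => ?_⟩
  have hperd : Periodic (fun a => dist (f a) (f (a + d))) L := fun a => by
    simp only [hper a, add_right_comm a L d, hper (a + d)]
  obtain ⟨a', ha', heq⟩ := hperd.exists_mem_Ico₀ hL a
  exact heq ▸ hle (a', d) ⟨Ico_subset_Icc_self ha', hd⟩

end Periodic

/-- A C^{1,1} simple closed curve (γ' Lipschitz, γ' ≠ 0) has DCSD > 0. -/
theorem dcsd_pos_of_C11 {n : ℕ} (L : ℝ) (hL : 0 < L) (C : NNReal)
    (γ : ℝ → EuclideanSpace ℝ (Fin n))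
    (hγ : ContDiff ℝ 1 γ) (hper : Function.Periodic γ L)
    (hinj : Set.InjOn γ (Set.Ico 0 L))
    (hLip : LipschitzWith C (deriv γ))
    (hreg : ∀ t, deriv γ t ≠ 0) :
    0 < DCSD γ := by
  have hdiff : Differentiable ℝ γ := hγ.differentiable one_ne_zero
  obtain ⟨m, hm0, hm⟩ := hper.deriv.exists_pos_le_norm hL.ne' (hγ.continuous_deriv le_rfl) hreg
  obtain ⟨δ, hδ0, hδ⟩ := exists_pos_le_dist_of_inner_sub_deriv_eq_zero hdiff hLip hm0 hm
  obtain ⟨ε, hε0, hε⟩ := hper.exists_pos_le_dist_add hL hinj hγ.continuous hδ0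
  have hnc : γ 0 ≠ γ (L / 2) := fun h => by
    have := hinj ⟨le_rfl, hL⟩ ⟨by linarith, by linarith⟩ h
    linarith
  obtain ⟨s, t, hst⟩ := hper.exists_double_critical_pair hL.ne' hdiff ⟨0, L / 2, hnc⟩
  refine hε0.trans_le (le_csInf ⟨_, s, t, hst.1, hst.2.1, hst.2.2, rfl⟩ ?_)
  rintro _ ⟨s, t, hne, -, ht, rfl⟩
  -- Shifting `t` by a period keeps the pair double critical, so `t - s` is `δ`-far from `Lℤ`.
  have hfar (k : ℤ) : δ ≤ dist (t - s) (k • L) := by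
    have hγk : γ (t - k • L) = γ t := hper.sub_zsmul_eq k
    have hne' : s ≠ t - k • L := fun h => hne (by rw [h, hγk])
    calc δ ≤ dist s (t - k • L) := hδ s _ hne' (by rwa [hγk, hper.deriv.sub_zsmul_eq k])
      _ = dist (t - s) (k • L) := by
        rw [Real.dist_eq, Real.dist_eq, abs_sub_comm]; congr 1; ring
  have hshift : γ (s + toIcoMod hL 0 (t - s)) = γ t := by
    rw [toIcoMod, ← add_sub_assoc, add_sub_cancel, hper.sub_zsmul_eq]
  simpa only [hshift] using hε s _ (toIcoMod_mem_Icc_of_forall_le_dist hL hfar)
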